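/- For all k ≥ 1, T(2,2k;k) - T(2,2k;k+1) = T(2,2k-1;k) - T(2,2k-1;k+1). -/

import Mathlib

/-- Two grid squares (given as (row, column) pairs) are adjacent if they agree in one
coordinate and differ by one in the other. -/
def Adj (p q : ℕ × ℕ) : Prop :=
  (p.1 = q.1 ∧ (p.2 + 1 = q.2 ∨ q.2 + 1 = p.2)) ∨
  (p.2 = q.2 ∧ (p.1 + 1 = q.1 ∨ q.1 + 1 = p.1))

instance : DecidableRel Adj := fun _ _ => by unfold Adj; infer_instance

/-- `T m n k` is the number of ways to select `k` squares from an `m × n` grid with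
no two selected squares horizontally or vertically adjacent. -/
def T (m n k : ℕ) : ℕ :=
  (((Finset.range m ×ˢ Finset.range n).powersetCard k).filter
    (fun s => ∀ p ∈ s, ∀ q ∈ s, ¬ Adj p q)).card


/-!
Let `c(n, k)` count the independent `k`-sets of the `2 × (n + 1)` grid that contain the top
square `(0, n)` of the last column. Splitting by the last column, and swapping the two rows,
gives `T(n + 1, k) = T(n, k) + 2 c(n, k)`; deleting the corner square gives
`c(n + 1, k + 1) = T(n, k) + c(n, k)`. Hence `c(a + b, a + 1)` satisfies the recurrence and the
boundary values of the Delannoy numbers `D(a, b)`, which are symmetric in `a` and `b`. The claim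
is `T(2k, k) - T(2k - 1, k) = T(2k, k + 1) - T(2k - 1, k + 1)`, that is
`2 c(2k - 1, k) = 2 c(2k - 1, k + 1)`, that is `D(k - 1, k) = D(k, k - 1)`.
-/

open Finset

def ladder (n : ℕ) : Finset (ℕ × ℕ) := range 2 ×ˢ range n

def IsIndep (s : Finset (ℕ × ℕ)) : Prop := ∀ p ∈ s, ∀ q ∈ s, ¬ Adj p q

instance : DecidablePred IsIndep := fun _ => by unfold IsIndep; infer_instance

def indepSets (n k : ℕ) : Finset (Finset (ℕ × ℕ)) := {s ∈ (ladder n).powersetCard k | IsIndep s}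

theorem T_two_eq_card (n k : ℕ) : T 2 n k = #(indepSets n k) := rfl

theorem mem_indepSets {n k : ℕ} {s : Finset (ℕ × ℕ)} :
    s ∈ indepSets n k ↔ s ⊆ ladder n ∧ #s = k ∧ IsIndep s := by
  simp [indepSets, mem_powersetCard, and_assoc]

theorem mem_ladder {n : ℕ} {p : ℕ × ℕ} : p ∈ ladder n ↔ p.1 < 2 ∧ p.2 < n := by
  simp [ladder]

theorem ladder_succ (n : ℕ) : ladder (n + 1) = insert (0, n) (insert (1, n) (ladder n)) := by
  ext ⟨r, c⟩
  simp only [ladder, mem_product, mem_range, mem_insert, Prod.mk.injEq]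
  omega

theorem not_adj_self (p : ℕ × ℕ) : ¬ Adj p p := by
  unfold Adj; omega

theorem Adj.symm {p q : ℕ × ℕ} (h : Adj p q) : Adj q p := by
  unfold Adj at *; omega

theorem adj_column (c : ℕ) : Adj (0, c) (1, c) := by
  simp [Adj]

theorem adj_corner_iff {n : ℕ} {q : ℕ × ℕ} (hq : q ∈ ladder (n + 1)) :
    Adj (0, n + 1) q ↔ q = (0, n) := by
  obtain ⟨r, c⟩ := q
  have := (mem_ladder.1 hq).2
  simp only [Adj, Prod.ext_iff] at this ⊢
  omega

theorem isIndep_insert {a : ℕ × ℕ} {s : Finset (ℕ × ℕ)} :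
    IsIndep (insert a s) ↔ IsIndep s ∧ ∀ q ∈ s, ¬ Adj a q := by
  simp only [IsIndep, mem_insert, forall_eq_or_imp]
  refine ⟨fun h => ⟨fun p hp q hq => h.2 p hp |>.2 q hq, h.1.2⟩,
    fun h => ⟨⟨not_adj_self a, h.2⟩, fun p hp => ⟨fun ha => h.2 p hp (Adj.symm ha), h.1 p hp⟩⟩⟩

theorem IsIndep.card_le {n : ℕ} {s : Finset (ℕ × ℕ)} (h : IsIndep s) (hs : s ⊆ ladder n) :
    #s ≤ n := by
  have hinj : Set.InjOn Prod.snd (s : Set (ℕ × ℕ)) := by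
    intro p hp q hq hcol
    have hp₁ := (mem_ladder.1 (hs hp)).1
    have hq₁ := (mem_ladder.1 (hs hq)).1
    by_contra hne
    have hrow : p.1 ≠ q.1 := fun h => hne (Prod.ext h hcol)
    exact h p hp q hq (Or.inr ⟨hcol, by omega⟩)
  simpa using card_le_card_of_injOn Prod.snd
    (fun p hp => mem_range.2 (mem_ladder.1 (hs hp)).2) hinj

theorem T_two_eq_zero_of_lt {n k : ℕ} (h : n < k) : T 2 n k = 0 := by
  rw [T_two_eq_card, card_eq_zero, eq_empty_iff_forall_notMem]
  intro s hs
  obtain ⟨hsub, rfl, hind⟩ := mem_indepSets.1 hs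
  exact absurd (hind.card_le hsub) (by omega)

theorem T_two_zero_right (n : ℕ) : T 2 n 0 = 1 := by
  rw [T_two_eq_card, indepSets, powersetCard_zero, filter_true_of_mem, card_singleton]
  simp [IsIndep]

def rowSwap : ℕ × ℕ ≃ ℕ × ℕ := (Equiv.swap 0 1).prodCongr (Equiv.refl ℕ)

theorem rowSwap_symm : rowSwap.symm = rowSwap := by
  simp [rowSwap, Equiv.prodCongr_symm]

theorem rowSwap_mem_ladder {n : ℕ} {p : ℕ × ℕ} : rowSwap p ∈ ladder n ↔ p ∈ ladder n := by
  obtain ⟨_ | _ | r, c⟩ := p <;> simp [rowSwap, mem_ladder, Equiv.swap_apply_of_ne_of_ne]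

theorem adj_rowSwap {p q : ℕ × ℕ} (hp : p.1 < 2) (hq : q.1 < 2) :
    Adj (rowSwap p) (rowSwap q) ↔ Adj p q := by
  obtain ⟨r, c⟩ := p
  obtain ⟨r', c'⟩ := q
  simp only at hp hq
  interval_cases r <;> interval_cases r' <;> simp [rowSwap, Adj]

theorem map_rowSwap_mem_indepSets {n k : ℕ} {s : Finset (ℕ × ℕ)} :
    s.map rowSwap.toEmbedding ∈ indepSets n k ↔ s ∈ indepSets n k := by
  simp only [mem_indepSets, card_map, IsIndep, subset_iff, forall_mem_map,
    Equiv.coe_toEmbedding, rowSwap_mem_ladder]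
  refine and_congr_right fun hs => and_congr_right fun _ =>
    forall₂_congr fun p hp => forall₂_congr fun q hq => not_congr ?_
  exact adj_rowSwap (mem_ladder.1 (hs p hp)).1 (mem_ladder.1 (hs q hq)).1

theorem card_filter_rowSwap_mem (n k : ℕ) (p : ℕ × ℕ) :
    #{s ∈ indepSets n k | rowSwap p ∈ s} = #{s ∈ indepSets n k | p ∈ s} := by
  have hinv (s : Finset (ℕ × ℕ)) :
      (s.map rowSwap.toEmbedding).map rowSwap.toEmbedding = s := by
    ext; simp [rowSwap_symm]
  refine card_nbij' (·.map rowSwap.toEmbedding) (·.map rowSwap.toEmbedding) ?_ ?_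
    (fun s _ => hinv s) (fun s _ => hinv s)
  · intro s hs
    simp_all [map_rowSwap_mem_indepSets, mem_map_equiv, rowSwap_symm]
  · intro s hs
    simp_all [map_rowSwap_mem_indepSets]

def cornerCount (n k : ℕ) : ℕ := #{s ∈ indepSets (n + 1) k | (0, n) ∈ s}

theorem filter_notMem_last_column (n k : ℕ) :
    {s ∈ indepSets (n + 1) k | (0, n) ∉ s ∧ (1, n) ∉ s} = indepSets n k := by
  ext s
  simp only [mem_filter, mem_indepSets, ladder_succ]
  constructor
  · rintro ⟨⟨hs, hcard, hind⟩, h₀, h₁⟩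
    exact ⟨(subset_insert_iff_of_notMem h₁).1 ((subset_insert_iff_of_notMem h₀).1 hs),
      hcard, hind⟩
  · rintro ⟨hs, hcard, hind⟩
    have hcol (r : ℕ) : (r, n) ∉ s := fun h => by simpa using (mem_ladder.1 (hs h)).2
    exact ⟨⟨hs.trans ((subset_insert _ _).trans (subset_insert _ _)), hcard, hind⟩,
      hcol 0, hcol 1⟩

theorem T_two_succ (n k : ℕ) : T 2 (n + 1) k = T 2 n k + 2 * cornerCount n k := by
  rw [T_two_eq_card, T_two_eq_card, cornerCount]
  set I := indepSets (n + 1) k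
  have hbottom : {s ∈ I | (1, n) ∈ s} = {s ∈ {s ∈ I | (0, n) ∉ s} | (1, n) ∈ s} := by
    rw [filter_filter]
    refine filter_congr fun s hs => ?_
    have hind := (mem_indepSets.1 hs).2.2
    exact ⟨fun h₁ => ⟨fun h₀ => hind _ h₀ _ h₁ (adj_column n), h₁⟩, And.right⟩
  have hswap : #{s ∈ I | (1, n) ∈ s} = #{s ∈ I | (0, n) ∈ s} :=
    card_filter_rowSwap_mem (n + 1) k (0, n)
  have hsplit₀ := card_filter_add_card_filter_not (s := I) (fun s => (0, n) ∈ s)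
  have hsplit₁ :=
    card_filter_add_card_filter_not (s := {s ∈ I | (0, n) ∉ s}) (fun s => (1, n) ∈ s)
  rw [← hbottom, filter_filter, filter_notMem_last_column] at hsplit₁
  omega

theorem insert_corner_mem_indepSets {n k : ℕ} {t : Finset (ℕ × ℕ)} (ht : (0, n + 1) ∉ t) :
    insert (0, n + 1) t ∈ indepSets (n + 2) (k + 1) ↔ t ∈ indepSets (n + 1) k ∧ (0, n) ∉ t := by
  simp only [mem_indepSets, isIndep_insert, card_insert_of_notMem ht, add_left_inj]
  constructor
  · rintro ⟨hs, hcard, hind, hcorner⟩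
    rw [ladder_succ (n + 1), insert_subset_insert_iff ht] at hs
    have hbottom : (1, n + 1) ∉ t := fun h => hcorner _ h (adj_column (n + 1))
    exact ⟨⟨(subset_insert_iff_of_notMem hbottom).1 hs, hcard, hind⟩,
      fun h => hcorner _ h ((adj_corner_iff (n := n) (by simp [mem_ladder])).2 rfl)⟩
  · rintro ⟨⟨hs, hcard, hind⟩, hn⟩
    refine ⟨insert_subset (by simp [mem_ladder]) (hs.trans ?_), hcard, hind,
      fun q hq hadj => hn ((adj_corner_iff (hs hq)).1 hadj ▸ hq)⟩
    rw [ladder_succ (n + 1)]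
    exact (subset_insert _ _).trans (subset_insert _ _)

theorem cornerCount_succ_succ_eq_card_filter (n k : ℕ) :
    cornerCount (n + 1) (k + 1) = #{t ∈ indepSets (n + 1) k | (0, n) ∉ t} := by
  have hcorner {t : Finset (ℕ × ℕ)} (ht : t ∈ indepSets (n + 1) k) : (0, n + 1) ∉ t :=
    fun h => by simpa using (mem_ladder.1 ((mem_indepSets.1 ht).1 h)).2
  refine card_nbij' (·.erase (0, n + 1)) (insert (0, n + 1)) ?_ ?_ ?_ ?_
  · intro s hs
    simp only [coe_filter, Set.mem_ofPred_eq] at hs ⊢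
    rw [← insert_erase hs.2] at hs
    exact (insert_corner_mem_indepSets (notMem_erase _ _)).1 hs.1
  · intro t ht
    simp only [coe_filter, Set.mem_ofPred_eq] at ht ⊢
    exact ⟨(insert_corner_mem_indepSets (hcorner ht.1)).2 ht, mem_insert_self _ _⟩
  · intro s hs
    exact insert_erase (mem_filter.1 hs).2
  · intro t ht
    exact erase_insert (hcorner (mem_filter.1 ht).1)

theorem cornerCount_succ_succ (n k : ℕ) :
    cornerCount (n + 1) (k + 1) = T 2 n k + cornerCount n k := by
  have hsplit := card_filter_add_card_filter_not (s := indepSets (n + 1) k) (fun t => (0, n) ∈ t)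
  rw [← cornerCount, ← cornerCount_succ_succ_eq_card_filter, ← T_two_eq_card, T_two_succ] at hsplit
  omega

theorem cornerCount_zero_right (n : ℕ) : cornerCount n 0 = 0 := by
  simp [cornerCount, indepSets]

theorem cornerCount_one_right (n : ℕ) : cornerCount n 1 = 1 := by
  cases n with
  | zero => decide
  | succ n => rw [cornerCount_succ_succ, T_two_zero_right, cornerCount_zero_right]

theorem cornerCount_self_succ (n : ℕ) : cornerCount n (n + 1) = 1 := by
  induction n with
  | zero => exact cornerCount_one_right 0
  | succ n ih => rw [cornerCount_succ_succ, T_two_eq_zero_of_lt n.lt_succ_self, ih]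

theorem cornerCount_add_two_add_two (n k : ℕ) :
    cornerCount (n + 2) (k + 2) =
      cornerCount (n + 1) (k + 2) + cornerCount (n + 1) (k + 1) + cornerCount n (k + 1) := by
  have h₁ : cornerCount (n + 2) (k + 2) = T 2 (n + 1) (k + 1) + cornerCount (n + 1) (k + 1) :=
    cornerCount_succ_succ (n + 1) (k + 1)
  have h₂ : cornerCount (n + 1) (k + 2) = T 2 n (k + 1) + cornerCount n (k + 1) :=
    cornerCount_succ_succ n (k + 1)
  have h₃ := T_two_succ n (k + 1)
  omega

def delannoy : ℕ → ℕ → ℕ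
  | 0, _ => 1
  | _ + 1, 0 => 1
  | a + 1, b + 1 => delannoy (a + 1) b + delannoy a (b + 1) + delannoy a b

theorem delannoy_comm (a b : ℕ) : delannoy a b = delannoy b a := by
  induction a, b using delannoy.induct with
  | case1 b => cases b <;> simp [delannoy]
  | case2 a => simp [delannoy]
  | case3 a b h₁ h₂ h₃ => rw [delannoy, delannoy, h₁, h₂, h₃]; ring

theorem cornerCount_add_eq_delannoy (a b : ℕ) :
    cornerCount (a + b) (a + 1) = delannoy a b := by
  induction a, b using delannoy.induct with
  | case1 b => simpa [delannoy] using cornerCount_one_right b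
  | case2 a => simpa [delannoy] using cornerCount_self_succ (a + 1)
  | case3 a b h₁ h₂ h₃ =>
    rw [delannoy, ← h₁, ← h₂, ← h₃, show a + 1 + (b + 1) = a + b + 2 by ring,
      cornerCount_add_two_add_two]
    ring_nf

theorem cornerCount_add_comm (a b : ℕ) :
    cornerCount (a + b) (a + 1) = cornerCount (a + b) (b + 1) := by
  rw [cornerCount_add_eq_delannoy, add_comm a b, cornerCount_add_eq_delannoy, delannoy_comm]

theorem T2_diff_eq_general (k : ℕ) :
    (T 2 (2 * k) k : ℤ) - (T 2 (2 * k) (k + 1) : ℤ) =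
      (T 2 (2 * k - 1) k : ℤ) - (T 2 (2 * k - 1) (k + 1) : ℤ) := by
  obtain _ | j := k
  · rfl
  have hsymm := cornerCount_add_comm j (j + 1)
  rw [show 2 * (j + 1) - 1 = j + (j + 1) by omega, show 2 * (j + 1) = j + (j + 1) + 1 by ring,
    T_two_succ, T_two_succ, hsymm]
  push_cast
  ring

theorem T2_diff_eq (k : ℕ) (hk : 1 ≤ k) :
    (T 2 (2 * k) k : ℤ) - (T 2 (2 * k) (k + 1) : ℤ) =
      (T 2 (2 * k - 1) k : ℤ) - (T 2 (2 * k - 1) (k + 1) : ℤ) :=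
  T2_diff_eq_general k
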